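/- arXiv:2010.04600 — 2 statements merged into one kernel-verified Lean document; each statement's English description precedes it below -/
import Mathlib

section
/- Let x̃ solve ẋ̃(t) = -a x̃(t) + σ̂(t) - σ(t) on [iT, (i+1)T], where a > 0, σ is continuous, and σ̂ is piecewise constant given on [iT,(i+1)T) by σ̂(t) = -(a/(e^{aT}-1)) x̃(iT). Then x̃((i+1)T) = -∫_{iT}^{(i+1)T} e^{-a((i+1)T - ξ)} σ(ξ) dξ. -/
/-!
Variation of constants over one sampling period gives
`x̃((i+1)T) = e^{-aT} x̃(iT) + ∫ e^{-a((i+1)T-ξ)} (σ̂ - σ(ξ)) dξ`. Since `σ̂` is constant on the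
period, its contribution is `((1 - e^{-aT})/a) σ̂`, and the gain `a/(e^{aT}-1)` is exactly the
one for which this cancels the free response `e^{-aT} x̃(iT)`.
-/

open Real intervalIntegral

section VariationOfConstants

variable {E : Type*} [NormedAddCommGroup E] [NormedSpace ℝ E] [CompleteSpace E]

lemma hasDerivAt_exp_neg_mul_sub (a t₁ s : ℝ) :
    HasDerivAt (fun s => exp (-a * (t₁ - s))) (exp (-a * (t₁ - s)) * a) s := by
  simpa using (((hasDerivAt_id s).const_sub t₁).const_mul (-a)).exp

theorem eq_exp_smul_add_integral_of_hasDerivAt {a t₀ t₁ : ℝ} (h : t₀ ≤ t₁) {x g : ℝ → E}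
    (hx : ∀ t ∈ Set.Icc t₀ t₁, HasDerivAt x ((-a) • x t + g t) t)
    (hg : ContinuousOn g (Set.Icc t₀ t₁)) :
    x t₁ = exp (-a * (t₁ - t₀)) • x t₀ + ∫ s in t₀..t₁, exp (-a * (t₁ - s)) • g s := by
  have hderiv : ∀ s ∈ Set.uIcc t₀ t₁,
      HasDerivAt (fun s => exp (-a * (t₁ - s)) • x s) (exp (-a * (t₁ - s)) • g s) s := by
    intro s hs
    rw [Set.uIcc_of_le h] at hs
    refine ((hasDerivAt_exp_neg_mul_sub a t₁ s).smul (hx s hs)).congr_deriv ?_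
    rw [mul_smul]
    module
  have hint : IntervalIntegrable (fun s => exp (-a * (t₁ - s)) • g s) MeasureTheory.volume t₀ t₁ :=
    (ContinuousOn.smul (by fun_prop) (Set.uIcc_of_le h ▸ hg)).intervalIntegrable
  rw [integral_eq_sub_of_hasDerivAt hderiv hint]
  simp

theorem integral_exp_neg_mul_sub {a : ℝ} (ha : a ≠ 0) (t₀ t₁ : ℝ) :
    ∫ s in t₀..t₁, exp (-a * (t₁ - s)) = (1 - exp (-a * (t₁ - t₀))) / a := by
  have hderiv : ∀ s ∈ Set.uIcc t₀ t₁,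
      HasDerivAt (fun s => exp (-a * (t₁ - s)) / a) (exp (-a * (t₁ - s))) s := fun s _ => by
    simpa [ha] using (hasDerivAt_exp_neg_mul_sub a t₁ s).div_const a
  rw [integral_eq_sub_of_hasDerivAt hderiv (Continuous.intervalIntegrable (by fun_prop) _ _)]
  simp [sub_div]

end VariationOfConstants

lemma exp_neg_mul_add_integral_mul_gain_eq_zero {a T : ℝ} (ha : a ≠ 0) (hT : T ≠ 0) :
    exp (-a * T) + (1 - exp (-a * T)) / a * (-(a / (exp (a * T) - 1))) = 0 := by
  have hE : exp (a * T) - 1 ≠ 0 := sub_ne_zero.2 (by simpa using mul_ne_zero ha hT)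
  rw [neg_mul, exp_neg]
  field_simp
  ring

/-- With the piecewise-constant adaptive law, the prediction error at the next
sampling instant equals minus the weighted integral of the uncertainty. -/
theorem stmt_6
    {n : ℕ} (a T : ℝ) (i : ℕ) (ha : 0 < a) (hT : 0 < T)
    (xtil : ℝ → EuclideanSpace ℝ (Fin n))
    (σ : ℝ → EuclideanSpace ℝ (Fin n))
    (hσ : Continuous σ)
    -- ẋ̃(t) = -a x̃(t) + σ̂(t) - σ(t), with σ̂ ≡ -(a/(e^{aT}-1)) x̃(iT) on the interval
    (hode : ∀ t ∈ Set.Icc ((i : ℝ) * T) (((i : ℝ) + 1) * T),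
      HasDerivAt xtil
        ((-a) • xtil t + (-(a / (Real.exp (a * T) - 1))) • xtil ((i : ℝ) * T) - σ t) t) :
    xtil (((i : ℝ) + 1) * T) =
      -∫ ξ in ((i : ℝ) * T)..(((i : ℝ) + 1) * T),
        Real.exp (-a * (((i : ℝ) + 1) * T - ξ)) • σ ξ := by
  set t₀ : ℝ := (i : ℝ) * T
  set t₁ : ℝ := ((i : ℝ) + 1) * T
  set σhat := (-(a / (exp (a * T) - 1))) • xtil t₀
  have hperiod : t₁ - t₀ = T := by ring
  have hduhamel := eq_exp_smul_add_integral_of_hasDerivAt (t₀ := t₀) (t₁ := t₁)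
    (g := fun t => σhat - σ t) (by nlinarith)
    (fun t ht => by simpa only [add_sub_assoc] using hode t ht)
    (by fun_prop)
  have hsplit : ∫ s in t₀..t₁, exp (-a * (t₁ - s)) • (σhat - σ s) =
      (∫ s in t₀..t₁, exp (-a * (t₁ - s))) • σhat - ∫ s in t₀..t₁, exp (-a * (t₁ - s)) • σ s := by
    simp only [smul_sub]
    rw [integral_sub (Continuous.intervalIntegrable (by fun_prop) _ _)
      (Continuous.intervalIntegrable (by fun_prop) _ _), intervalIntegral.integral_smul_const]
  rw [hduhamel, hsplit, integral_exp_neg_mul_sub ha.ne', hperiod, smul_smul,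
    ← add_sub_assoc, ← add_smul, exp_neg_mul_add_integral_mul_gain_eq_zero ha.ne' hT.ne']
  simp
end

section
/- Sampled-data estimation error bound: under the hypotheses that (a) the true lumped uncertainty σ(t) satisfies ‖σ(t)‖ ≤ b_σ and ‖σ(t)-σ(s)‖ ≤ L_σ|t-s| on [0,τ], and (b) the piecewise-constant estimate satisfies σ̂(t) = e^{-aT}(σ₁(τ₁*),…,σₙ(τₙ*))ᵀ for t ∈ [(i+1)T,(i+2)T) with τⱼ* ∈ (iT,(i+1)T), and σ̂_c(t) = 0 on [0,T), σ̂_c(t) = σ̂(t) on [T,τ], then the error σ̃ = σ̂_c - σ satisfies: ‖σ̃(t)‖ ≤ b_σ for t ∈ [0,T), and ‖σ̃(t)‖ ≤ 2√n T L_σ + (1-e^{-aT})√n b_σ for t ∈ [T,τ]. In particular the bound on [T,τ] tends to 0 as T → 0. -/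
/-!
On the sampling interval containing `t ≥ T`, each component of the estimate is
`c σⱼ(τⱼ*)` with `c = e^{-aT} ∈ (0,1]` and `|τⱼ* - t| ≤ 2T`. Splitting
`c σⱼ(τⱼ*) - σⱼ(t) = c (σⱼ(τⱼ*) - σⱼ(t)) - (1 - c) σⱼ(t)` bounds every component of the
error by `2 T L_σ + (1 - c) b_σ`, and passing from the componentwise bound to the Euclidean
norm costs the factor `√n`.
-/

open Set

def toE {n : ℕ} (v : Fin n → ℝ) : EuclideanSpace ℝ (Fin n) := WithLp.toLp 2 v

lemma EuclideanSpace.norm_le_sqrt_card_mul {ι : Type*} [Fintype ι] (x : EuclideanSpace ℝ ι)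
    {c : ℝ} (h : ∀ i, |x i| ≤ c) : ‖x‖ ≤ √(Fintype.card ι) * c := by
  rcases isEmpty_or_nonempty ι with _ | ⟨⟨i₀⟩⟩
  · simp [Subsingleton.elim x 0]
  have hc : 0 ≤ c := (abs_nonneg _).trans (h i₀)
  rw [EuclideanSpace.norm_eq, ← Real.sqrt_sq hc, ← Real.sqrt_mul (Nat.cast_nonneg _)]
  gcongr
  calc ∑ i, ‖x i‖ ^ 2 ≤ ∑ _i : ι, c ^ 2 := by
        gcongr with i
        exact h i
    _ = Fintype.card ι * c ^ 2 := by simp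

lemma abs_mul_sub_le {c s u : ℝ} (hc₀ : 0 ≤ c) (hc₁ : c ≤ 1) :
    |c * s - u| ≤ |s - u| + (1 - c) * |u| :=
  calc |c * s - u| = |c * (s - u) - (1 - c) * u| := by congr 1; ring
    _ ≤ |c * (s - u)| + |(1 - c) * u| := abs_sub _ _
    _ = c * |s - u| + (1 - c) * |u| := by
        rw [abs_mul, abs_mul, abs_of_nonneg hc₀, abs_of_nonneg (sub_nonneg.2 hc₁)]
    _ ≤ |s - u| + (1 - c) * |u| := by
        gcongr
        exact mul_le_of_le_one_left (abs_nonneg _) hc₁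

lemma exists_nat_mem_Ico_succ_mul {T t : ℝ} (hT : 0 < T) (ht : T ≤ t) :
    ∃ i : ℕ, t ∈ Ico (((i : ℝ) + 1) * T) (((i : ℝ) + 2) * T) := by
  have h : 0 ≤ t / T - 1 := by rwa [sub_nonneg, one_le_div hT]
  refine ⟨⌊t / T - 1⌋₊, ?_, ?_⟩
  · have := Nat.floor_le h
    rwa [le_sub_iff_add_le, le_div_iff₀ hT] at this
  · have := Nat.lt_floor_add_one (t / T - 1)
    rwa [sub_lt_iff_lt_add, div_lt_iff₀ hT, add_assoc, one_add_one_eq_two] at this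

lemma norm_smul_toE_sub_le {n : ℕ} (σ : ℝ → EuclideanSpace ℝ (Fin n)) (τstar : Fin n → ℝ)
    {c t ε b : ℝ} (hc₀ : 0 ≤ c) (hc₁ : c ≤ 1) (hb : ‖σ t‖ ≤ b)
    (hclose : ∀ j, ‖σ (τstar j) - σ t‖ ≤ ε) :
    ‖c • toE (fun j => σ (τstar j) j) - σ t‖ ≤ √n * (ε + (1 - c) * b) := by
  simpa using EuclideanSpace.norm_le_sqrt_card_mul _ fun j =>
    calc |c * σ (τstar j) j - σ t j| ≤ |σ (τstar j) j - σ t j| + (1 - c) * |σ t j| :=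
          abs_mul_sub_le hc₀ hc₁
      _ ≤ ε + (1 - c) * b := by
          gcongr
          · exact (PiLp.norm_apply_le (σ (τstar j) - σ t) j).trans (hclose j)
          · exact (PiLp.norm_apply_le (σ t) j).trans hb

/-- Sampled-data estimation error bound: the piecewise-constant estimate built
from component-wise mean-value points yields an error bounded by `b_σ` on the
first sampling interval and by `2√n T L_σ + (1-e^{-aT})√n b_σ` afterwards; the
latter bound tends to `0` as `T → 0⁺`. -/
theorem stmt_19
    {n : ℕ} (a T τ Lσ bσ : ℝ) (ha : 0 < a) (hT : 0 < T) (hTτ : T ≤ τ)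
    (σ σhat σhatc : ℝ → EuclideanSpace ℝ (Fin n))
    -- (a) boundedness and Lipschitz continuity of the lumped uncertainty on [0,τ]
    (hb : ∀ t ∈ Set.Icc (0:ℝ) τ, ‖σ t‖ ≤ bσ)
    (hLip : ∀ t ∈ Set.Icc (0:ℝ) τ, ∀ s ∈ Set.Icc (0:ℝ) τ,
      ‖σ t - σ s‖ ≤ Lσ * |t - s|)
    -- (b) mean-value representation of the piecewise-constant estimate
    (hrep : ∀ i : ℕ, ∀ t ∈ Set.Ico (((i : ℝ) + 1) * T) (((i : ℝ) + 2) * T),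
      ∃ τstar : Fin n → ℝ,
        (∀ j, τstar j ∈ Set.Ioo ((i : ℝ) * T) (((i : ℝ) + 1) * T)) ∧
        σhat t = Real.exp (-a * T) • toE (fun j => σ (τstar j) j))
    -- σ̂_c vanishes on [0,T) and equals σ̂ on [T,τ]
    (hc1 : ∀ t ∈ Set.Ico (0:ℝ) T, σhatc t = 0)
    (hc2 : ∀ t ∈ Set.Icc T τ, σhatc t = σhat t) :
    (∀ t ∈ Set.Ico (0:ℝ) T, ‖σhatc t - σ t‖ ≤ bσ) ∧
    (∀ t ∈ Set.Icc T τ,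
      ‖σhatc t - σ t‖ ≤ 2 * Real.sqrt n * T * Lσ +
        (1 - Real.exp (-a * T)) * Real.sqrt n * bσ) ∧
    Filter.Tendsto
      (fun T' : ℝ => 2 * Real.sqrt n * T' * Lσ + (1 - Real.exp (-a * T')) * Real.sqrt n * bσ)
      (nhdsWithin 0 (Set.Ioi 0)) (nhds 0) := by
  refine ⟨fun t ht => ?_, fun t ht => ?_, ?_⟩
  · rw [hc1 t ht, zero_sub, norm_neg]
    exact hb t ⟨ht.1, ht.2.le.trans hTτ⟩
  · have hL : 0 ≤ Lσ := by
      have := (norm_nonneg _).trans (hLip 0 ⟨le_rfl, hT.le.trans hTτ⟩ T ⟨hT.le, hTτ⟩)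
      rwa [zero_sub, abs_neg, abs_of_pos hT, mul_nonneg_iff_of_pos_right hT] at this
    have htτ : t ∈ Icc 0 τ := ⟨hT.le.trans ht.1, ht.2⟩
    obtain ⟨i, hti⟩ := exists_nat_mem_Ico_succ_mul hT ht.1
    obtain ⟨τstar, hτstar, hhat⟩ := hrep i t hti
    have hiT : (0 : ℝ) ≤ i * T := by positivity
    have hclose : ∀ j, ‖σ (τstar j) - σ t‖ ≤ Lσ * (2 * T) := fun j =>
      have ⟨h₁, h₂⟩ := hτstar j
      (hLip _ ⟨by linarith, by linarith [hti.1, ht.2]⟩ t htτ).trans <|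
        mul_le_mul_of_nonneg_left
          (abs_sub_le_iff.2 ⟨by linarith [hti.1], by linarith [hti.2]⟩) hL
    have hexp : Real.exp (-a * T) ≤ 1 :=
      Real.exp_le_one_iff.2 (by rw [neg_mul, neg_nonpos]; exact (mul_pos ha hT).le)
    rw [hc2 t ht, hhat]
    calc _ ≤ √n * (Lσ * (2 * T) + (1 - Real.exp (-a * T)) * bσ) :=
          norm_smul_toE_sub_le σ τstar (Real.exp_pos _).le hexp (hb t htτ) hclose
      _ = _ := by ring
  · refine Filter.Tendsto.mono_left ?_ nhdsWithin_le_nhds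
    exact (by fun_prop : Continuous _).tendsto' 0 0 (by simp)
end
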